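/- arXiv:2406.07015 — 2 statements merged into one kernel-verified Lean document; each statement's English description precedes it below -/
import Mathlib

section
/- If Q(x,y,z) = A x^4 + B y^4 + C z^4 + D x^2 y^2 + E x^2 z^2 + F y^2 z^2 satisfies Hess(Q) = x^2 y^2 z^2 as polynomials, then exactly one of the following holds: (1) D=E=F=0 and 1728ABC=1; (2) A=B=E=F=0 and 144CD²=−1; (3) A=C=D=F=0 and 144BE²=−1; (4) B=C=D=E=0 and 144AF²=−1. -/
/-!
`Hess Q` is an even sextic form, and comparing its coefficients with those of `x²y²z²` gives
ten equations in `A, …, F`. Those of `x⁶` and `x⁴y²` read `ADE = 0` and `D²E = A(12BE + 2DF)`,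
so `D` and `E` cannot both be nonzero; by symmetry at most one of `D, E, F` is nonzero.
If only `F` is, the coefficients of `x²y⁴` and `x²z⁴` give `AB = AC = 0`, and the coefficient
of `x²y²z²` becomes `-144AF² = 1`, so `A ≠ 0` and `B = C = 0`; if `D = E = F = 0` it reads
`1728ABC = 1`. The four resulting cases are visibly mutually exclusive.
-/

open MvPolynomial

/-- The Hessian determinant of a polynomial in three variables. -/
noncomputable def hessian (f : MvPolynomial (Fin 3) ℂ) : MvPolynomial (Fin 3) ℂ :=
  Matrix.det (Matrix.of fun i j : Fin 3 => pderiv i (pderiv j f))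

theorem Derivation.map_ofNat {R A M : Type*} [CommSemiring R] [CommSemiring A] [AddCommMonoid M]
    [Algebra R A] [Module A M] [Module R M] (D : Derivation R A M) (n : ℕ) [n.AtLeastTwo] :
    D (ofNat(n) : A) = 0 := by
  rw [← Nat.cast_ofNat]
  exact D.map_natCast n

theorem eq_zero_or_eq_zero_of_sq_mul_eq_mul {M : Type*} [MonoidWithZero M] [NoZeroDivisors M]
    {a c d e : M} (h₁ : a * d * e = 0) (h₂ : d ^ 2 * e = a * c) : d = 0 ∨ e = 0 := by
  by_contra! hde
  have ha : a = 0 := by simpa [hde.1, hde.2] using h₁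
  simp [ha, hde.1, hde.2] at h₂

theorem eq_zero_and_eq_zero_of_single_mixed_term {R : Type*} [CommRing R] [IsDomain R]
    {a b c f : R} (hab : a * b * f = 0) (hac : a * c * f = 0)
    (h : 144 * (12 * a * b * c - a * f ^ 2) = 1) (hf : f ≠ 0) :
    b = 0 ∧ c = 0 ∧ 144 * a * f ^ 2 = -1 := by
  have hab' : a * b = 0 := (mul_eq_zero.1 hab).resolve_right hf
  have hac' : a * c = 0 := (mul_eq_zero.1 hac).resolve_right hf
  have haf : 144 * a * f ^ 2 = -1 := by linear_combination 1728 * c * hab' - h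
  have ha : a ≠ 0 := by rintro rfl; simp at haf
  exact ⟨(mul_eq_zero.1 hab').resolve_left ha, (mul_eq_zero.1 hac').resolve_left ha, haf⟩

noncomputable def quartic (A B C' D E F : ℂ) : MvPolynomial (Fin 3) ℂ :=
  C A * X 0 ^ 4 + C B * X 1 ^ 4 + C C' * X 2 ^ 4 + C D * X 0 ^ 2 * X 1 ^ 2 +
    C E * X 0 ^ 2 * X 2 ^ 2 + C F * X 1 ^ 2 * X 2 ^ 2

theorem eval_pderiv_pderiv_quartic (A B C' D E F x y z : ℂ) :
    (eval ![x, y, z]).mapMatrix (Matrix.of fun i j => pderiv i (pderiv j (quartic A B C' D E F))) =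
      !![12 * A * x ^ 2 + 2 * D * y ^ 2 + 2 * E * z ^ 2, 4 * D * x * y, 4 * E * x * z;
        4 * D * x * y, 12 * B * y ^ 2 + 2 * D * x ^ 2 + 2 * F * z ^ 2, 4 * F * y * z;
        4 * E * x * z, 4 * F * y * z, 12 * C' * z ^ 2 + 2 * E * x ^ 2 + 2 * F * y ^ 2] := by
  ext i j
  fin_cases i <;> fin_cases j <;> simp [quartic, Derivation.map_ofNat] <;> ring

theorem eval_hessian_quartic (A B C' D E F x y z : ℂ) :
    eval ![x, y, z] (hessian (quartic A B C' D E F)) =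
      48 * (A * D * E * x ^ 6 + B * D * F * y ^ 6 + C' * E * F * z ^ 6) +
      24 * ((12 * A * B * E + 2 * A * D * F - D ^ 2 * E) * x ^ 4 * y ^ 2 +
        (12 * A * B * F + 2 * B * D * E - D ^ 2 * F) * x ^ 2 * y ^ 4 +
        (12 * A * C' * D + 2 * A * E * F - D * E ^ 2) * x ^ 4 * z ^ 2 +
        (12 * A * C' * F + 2 * C' * D * E - E ^ 2 * F) * x ^ 2 * z ^ 4 +
        (12 * B * C' * D + 2 * B * E * F - D * F ^ 2) * y ^ 4 * z ^ 2 +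
        (12 * B * C' * E + 2 * C' * D * F - E * F ^ 2) * y ^ 2 * z ^ 4) +
      144 * (12 * A * B * C' - A * F ^ 2 - B * E ^ 2 - C' * D ^ 2 + D * E * F) *
        x ^ 2 * y ^ 2 * z ^ 2 := by
  rw [hessian, RingHom.map_det, eval_pderiv_pderiv_quartic, Matrix.det_fin_three]
  simp only [Matrix.of_apply, Matrix.cons_val', Matrix.cons_val_zero, Matrix.cons_val_one,
    Matrix.cons_val, Matrix.cons_val_fin_one]
  ring

/-- The equations obtained by comparing the coefficients of `Hess Q` and `x²y²z²`, each named
after its monomial and divided by the common factor `48`, `24` or `144` of that coefficient. -/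
structure QuarticCoeffs (A B C' D E F : ℂ) : Prop where
  x6 : A * D * E = 0
  y6 : B * D * F = 0
  z6 : C' * E * F = 0
  x4y2 : D ^ 2 * E = 12 * A * B * E + 2 * A * D * F
  x2y4 : D ^ 2 * F = 12 * A * B * F + 2 * B * D * E
  x4z2 : D * E ^ 2 = 12 * A * C' * D + 2 * A * E * F
  x2z4 : E ^ 2 * F = 12 * A * C' * F + 2 * C' * D * E
  y4z2 : D * F ^ 2 = 12 * B * C' * D + 2 * B * E * F
  y2z4 : E * F ^ 2 = 12 * B * C' * E + 2 * C' * D * F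
  x2y2z2 : 144 * (12 * A * B * C' - A * F ^ 2 - B * E ^ 2 - C' * D ^ 2 + D * E * F) = 1

theorem QuarticCoeffs.of_hessian_eq {A B C' D E F : ℂ}
    (h : hessian (quartic A B C' D E F) = X 0 ^ 2 * X 1 ^ 2 * X 2 ^ 2) :
    QuarticCoeffs A B C' D E F := by
  have hv (x y z : ℂ) := by
    simpa [eval_hessian_quartic] using congrArg (eval ![x, y, z]) h
  have x6 : A * D * E = 0 := by linear_combination hv 1 0 0 / 48
  have y6 : B * D * F = 0 := by linear_combination hv 0 1 0 / 48
  have z6 : C' * E * F = 0 := by linear_combination hv 0 0 1 / 48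
  -- The values at `(1,1,0)` and `(2,1,0)` separate the coefficients of `x⁴y²` and `x²y⁴`;
  -- likewise for the other two pairs of variables.
  refine ⟨x6, y6, z6, ?_, ?_, ?_, ?_, ?_, ?_, ?_⟩
  · linear_combination (4 * hv 1 1 0 - hv 2 1 0) / 288 + 10 * x6 - y6 / 2
  · linear_combination (hv 2 1 0 - 16 * hv 1 1 0) / 288 - 8 * x6 + 5 / 2 * y6
  · linear_combination (4 * hv 1 0 1 - hv 2 0 1) / 288 + 10 * x6 - z6 / 2
  · linear_combination (hv 2 0 1 - 16 * hv 1 0 1) / 288 - 8 * x6 + 5 / 2 * z6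
  · linear_combination (4 * hv 0 1 1 - hv 0 2 1) / 288 + 10 * y6 - z6 / 2
  · linear_combination (hv 0 2 1 - 16 * hv 0 1 1) / 288 - 8 * y6 + 5 / 2 * z6
  · linear_combination hv 1 1 1 - hv 1 1 0 - hv 1 0 1 - hv 0 1 1 + 48 * (x6 + y6 + z6)

def quarticCase (A B C' D E F : ℂ) : Fin 4 → Prop :=
  ![D = 0 ∧ E = 0 ∧ F = 0 ∧ 1728 * A * B * C' = 1,
    A = 0 ∧ B = 0 ∧ E = 0 ∧ F = 0 ∧ 144 * C' * D ^ 2 = -1,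
    A = 0 ∧ C' = 0 ∧ D = 0 ∧ F = 0 ∧ 144 * B * E ^ 2 = -1,
    B = 0 ∧ C' = 0 ∧ D = 0 ∧ E = 0 ∧ 144 * A * F ^ 2 = -1]

theorem quarticCase_unique {A B C' D E F : ℂ} {i j : Fin 4} (hi : quarticCase A B C' D E F i)
    (hj : quarticCase A B C' D E F j) : i = j := by
  fin_cases i <;> fin_cases j <;> simp_all [quarticCase]

theorem QuarticCoeffs.exists_quarticCase {A B C' D E F : ℂ} (S : QuarticCoeffs A B C' D E F) :
    ∃ i, quarticCase A B C' D E F i := by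
  have hDE : D = 0 ∨ E = 0 :=
    eq_zero_or_eq_zero_of_sq_mul_eq_mul (c := 12 * B * E + 2 * D * F) S.x6
      (by linear_combination S.x4y2)
  have hDF : D = 0 ∨ F = 0 :=
    eq_zero_or_eq_zero_of_sq_mul_eq_mul (a := B) (c := 12 * A * F + 2 * D * E)
      (by linear_combination S.y6) (by linear_combination S.x2y4)
  have hEF : E = 0 ∨ F = 0 :=
    eq_zero_or_eq_zero_of_sq_mul_eq_mul (c := 12 * A * F + 2 * D * E) S.z6
      (by linear_combination S.x2z4)
  by_cases hD : D = 0
  · by_cases hE : E = 0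
    · subst hD hE
      by_cases hF : F = 0
      · subst hF
        exact ⟨0, rfl, rfl, rfl, by linear_combination S.x2y2z2⟩
      · obtain ⟨hB, hC, hAF⟩ :=
          eq_zero_and_eq_zero_of_single_mixed_term (a := A) (b := B) (c := C')
          (by linear_combination -S.x2y4 / 12) (by linear_combination -S.x2z4 / 12)
          (by linear_combination S.x2y2z2) hF
        exact ⟨3, hB, hC, rfl, rfl, hAF⟩
    · obtain rfl := hEF.resolve_left hE
      subst hD
      obtain ⟨hA, hC, hBE⟩ :=
        eq_zero_and_eq_zero_of_single_mixed_term (a := B) (b := A) (c := C')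
        (by linear_combination -S.x4y2 / 12) (by linear_combination -S.y2z4 / 12)
        (by linear_combination S.x2y2z2) hE
      exact ⟨2, hA, hC, rfl, rfl, hBE⟩
  · obtain rfl := hDE.resolve_left hD
    obtain rfl := hDF.resolve_left hD
    obtain ⟨hA, hB, hCD⟩ :=
      eq_zero_and_eq_zero_of_single_mixed_term (a := C') (b := A) (c := B)
      (by linear_combination -S.x4z2 / 12) (by linear_combination -S.y4z2 / 12)
      (by linear_combination S.x2y2z2) hD
    exact ⟨1, hA, hB, rfl, rfl, hCD⟩

/-- If `Hess Q = x²y²z²` for `Q = A x⁴ + B y⁴ + C z⁴ + D x²y² + E x²z² + F y²z²`,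
then exactly one of the four listed sets of conditions holds. -/
theorem hessian_eq_xyz_sq_cases (A B C' D E F : ℂ)
    (h : hessian (MvPolynomial.C A * X 0 ^ 4 + MvPolynomial.C B * X 1 ^ 4 +
        MvPolynomial.C C' * X 2 ^ 4 + MvPolynomial.C D * X 0 ^ 2 * X 1 ^ 2 +
        MvPolynomial.C E * X 0 ^ 2 * X 2 ^ 2 + MvPolynomial.C F * X 1 ^ 2 * X 2 ^ 2) =
      X 0 ^ 2 * X 1 ^ 2 * X 2 ^ 2) :
    ∃! i : Fin 4,
      ![D = 0 ∧ E = 0 ∧ F = 0 ∧ 1728 * A * B * C' = 1,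
        A = 0 ∧ B = 0 ∧ E = 0 ∧ F = 0 ∧ 144 * C' * D ^ 2 = -1,
        A = 0 ∧ C' = 0 ∧ D = 0 ∧ F = 0 ∧ 144 * B * E ^ 2 = -1,
        B = 0 ∧ C' = 0 ∧ D = 0 ∧ E = 0 ∧ 144 * A * F ^ 2 = -1] i := by
  obtain ⟨i, hi⟩ := (QuarticCoeffs.of_hessian_eq h).exists_quarticCase
  exact ⟨i, hi, fun j hj => quarticCase_unique hj hi⟩
end

section
/- If C : f = 0 is an irreducible plane quartic over C invariant under the sign-change group G_8 and its Hessian satisfies Hess(f) = x²y²z², then f = A x^4 + B y^4 + C z^4 for complex constants A, B, C with ABC = 1/1728. -/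
set_option maxRecDepth 8000
set_option maxHeartbeats 1000000

open MvPolynomial

/-- The sign change in the `j`-th variable, as a substitution on `ℂ[x,y,z]`. -/
noncomputable def signChange (j : Fin 3) :
    MvPolynomial (Fin 3) ℂ →ₐ[ℂ] MvPolynomial (Fin 3) ℂ :=
  MvPolynomial.aeval (fun i => if i = j then -X i else X i)

lemma signChange_monomial (j : Fin 3) (m : Fin 3 →₀ ℕ) (c : ℂ) :
    signChange j (monomial m c) = (-1 : ℂ) ^ (m j) • monomial m c := by
  classical
  rw [signChange, aeval_monomial]
  have h1 : (m.prod fun i k => (if i = j then -X i else X i) ^ k)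
      = (m.prod fun i k => (if i = j then ((-1 : MvPolynomial (Fin 3) ℂ)) ^ k else 1))
        * (m.prod fun i k => (X i : MvPolynomial (Fin 3) ℂ) ^ k) := by
    rw [← Finsupp.prod_mul]
    apply Finsupp.prod_congr
    intro i _
    by_cases h : i = j
    · subst h; rw [if_pos rfl, if_pos rfl, neg_eq_neg_one_mul, mul_pow]
    · simp [h]
  have h2 : (m.prod fun i k => (if i = j then ((-1 : MvPolynomial (Fin 3) ℂ)) ^ k else 1))
      = (-1 : MvPolynomial (Fin 3) ℂ) ^ (m j) := by
    rw [Finsupp.prod_ite_eq' m j (fun i k => ((-1 : MvPolynomial (Fin 3) ℂ)) ^ k)]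
    split
    · rfl
    · rename_i h; rw [Finsupp.notMem_support_iff.mp h]; rfl
  rw [h1, h2, monomial_eq, smul_eq_C_mul]
  simp only [algebraMap_eq, map_pow, map_neg, map_one]
  ring

lemma coeff_signChange (j : Fin 3) (f : MvPolynomial (Fin 3) ℂ) (m : Fin 3 →₀ ℕ) :
    coeff m (signChange j f) = (-1 : ℂ) ^ (m j) * coeff m f := by
  conv_lhs => rw [f.as_sum, map_sum]
  rw [Finset.sum_congr rfl (fun v _ => signChange_monomial j v (coeff v f))]
  rw [coeff_sum]
  simp only [coeff_smul, coeff_monomial, smul_eq_mul, mul_ite, mul_zero]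
  rw [Finset.sum_ite_eq' f.support m (fun v => (-1:ℂ)^(v j) * coeff v f)]
  split
  · rfl
  · rename_i h
    rw [MvPolynomial.notMem_support_iff.mp h, mul_zero]

lemma coeff_eq_zero_of_odd (j : Fin 3) (f : MvPolynomial (Fin 3) ℂ)
    (hinv : signChange j f = f) (m : Fin 3 →₀ ℕ) (hm : Odd (m j)) :
    coeff m f = 0 := by
  have h := coeff_signChange j f m
  rw [hinv, hm.neg_one_pow] at h
  linear_combination h / 2

noncomputable def expv (a b c : ℕ) : Fin 3 →₀ ℕ :=
  Finsupp.single 0 a + Finsupp.single 1 b + Finsupp.single 2 c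

@[simp] lemma expv_apply0 (a b c : ℕ) : expv a b c 0 = a := by
  simp [expv, Finsupp.single_apply]
@[simp] lemma expv_apply1 (a b c : ℕ) : expv a b c 1 = b := by
  simp [expv, Finsupp.single_apply]
@[simp] lemma expv_apply2 (a b c : ℕ) : expv a b c 2 = c := by
  simp [expv, Finsupp.single_apply]

lemma expv_eta (m : Fin 3 →₀ ℕ) : expv (m 0) (m 1) (m 2) = m := by
  ext i; fin_cases i <;> simp

lemma degree_eq (m : Fin 3 →₀ ℕ) : m.degree = m 0 + m 1 + m 2 := by
  rw [Finsupp.degree_apply, Finset.sum_subset (Finset.subset_univ _)]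
  · rw [Fin.sum_univ_three]
  · intro i _ hi; exact Finsupp.notMem_support_iff.mp hi

lemma monomial_expv_eq (a b c : ℕ) (r : ℂ) :
    monomial (expv a b c) r = C r * X 0 ^ a * X 1 ^ b * X 2 ^ c := by
  rw [X_pow_eq_monomial, X_pow_eq_monomial, X_pow_eq_monomial, mul_assoc, mul_assoc,
    monomial_mul, monomial_mul, C_mul_monomial, expv, one_mul, one_mul, add_assoc, mul_one]

lemma decomp (f : MvPolynomial (Fin 3) ℂ) (hhom : f.IsHomogeneous 4)
    (hodd : ∀ m : Fin 3 →₀ ℕ, (Odd (m 0) ∨ Odd (m 1) ∨ Odd (m 2)) → coeff m f = 0) :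
    f = monomial (expv 4 0 0) (coeff (expv 4 0 0) f)
      + monomial (expv 0 4 0) (coeff (expv 0 4 0) f)
      + monomial (expv 0 0 4) (coeff (expv 0 0 4) f)
      + monomial (expv 2 2 0) (coeff (expv 2 2 0) f)
      + monomial (expv 2 0 2) (coeff (expv 2 0 2) f)
      + monomial (expv 0 2 2) (coeff (expv 0 2 2) f) := by
  ext m
  have key : ∀ a b c : ℕ, (expv a b c = m) ↔ (m 0 = a ∧ m 1 = b ∧ m 2 = c) := by
    intro a b c
    constructor
    · intro h; rw [← h]; simp
    · rintro ⟨h1, h2, h3⟩; rw [← h1, ← h2, ← h3]; exact expv_eta m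
  simp only [coeff_add, coeff_monomial, key]
  by_cases h4 : m.degree = 4
  swap
  · rw [hhom.coeff_eq_zero h4]
    rw [degree_eq] at h4
    split_ifs <;> first | (exfalso; omega) | simp
  · rw [degree_eq] at h4
    by_cases ho : Odd (m 0) ∨ Odd (m 1) ∨ Odd (m 2)
    · rw [hodd m ho]
      rw [Nat.odd_iff, Nat.odd_iff, Nat.odd_iff] at ho
      split_ifs <;> first | (exfalso; omega) | simp
    · push_neg at ho
      obtain ⟨e0, e1, e2⟩ := ho
      rw [Nat.not_odd_iff_even, Nat.even_iff] at e0 e1 e2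
      have hcases : (m 0 = 4 ∧ m 1 = 0 ∧ m 2 = 0) ∨ (m 0 = 0 ∧ m 1 = 4 ∧ m 2 = 0)
          ∨ (m 0 = 0 ∧ m 1 = 0 ∧ m 2 = 4) ∨ (m 0 = 2 ∧ m 1 = 2 ∧ m 2 = 0)
          ∨ (m 0 = 2 ∧ m 1 = 0 ∧ m 2 = 2) ∨ (m 0 = 0 ∧ m 1 = 2 ∧ m 2 = 2) := by omega
      have e := expv_eta m
      rcases hcases with ⟨h1,h2,h3⟩|⟨h1,h2,h3⟩|⟨h1,h2,h3⟩|⟨h1,h2,h3⟩|⟨h1,h2,h3⟩|⟨h1,h2,h3⟩ <;>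
        · rw [h1, h2, h3] at e
          rw [← e]
          simp
lemma hessian_explicit (A B C2 D E F : ℂ) :
    hessian (C A * X 0 ^ 4 + C B * X 1 ^ 4 + C C2 * X 2 ^ 4
      + C D * X 0 ^ 2 * X 1 ^ 2 + C E * X 0 ^ 2 * X 2 ^ 2 + C F * X 1 ^ 2 * X 2 ^ 2) =
      (48) * C C2 * C E * C F * X 2 ^ 6
      + (-24) * C E * C F * C F * X 1 ^ 2 * X 2 ^ 4
      + (48) * C C2 * C D * C F * X 1 ^ 2 * X 2 ^ 4
      + (288) * C B * C C2 * C E * X 1 ^ 2 * X 2 ^ 4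
      + (-24) * C D * C F * C F * X 1 ^ 4 * X 2 ^ 2
      + (48) * C B * C E * C F * X 1 ^ 4 * X 2 ^ 2
      + (288) * C B * C C2 * C D * X 1 ^ 4 * X 2 ^ 2
      + (48) * C B * C D * C F * X 1 ^ 6
      + (-24) * C E * C E * C F * X 0 ^ 2 * X 2 ^ 4
      + (48) * C C2 * C D * C E * X 0 ^ 2 * X 2 ^ 4
      + (288) * C A * C C2 * C F * X 0 ^ 2 * X 2 ^ 4
      + (144) * C D * C E * C F * X 0 ^ 2 * X 1 ^ 2 * X 2 ^ 2
      + (-144) * C C2 * C D * C D * X 0 ^ 2 * X 1 ^ 2 * X 2 ^ 2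
      + (-144) * C B * C E * C E * X 0 ^ 2 * X 1 ^ 2 * X 2 ^ 2
      + (-144) * C A * C F * C F * X 0 ^ 2 * X 1 ^ 2 * X 2 ^ 2
      + (1728) * C A * C B * C C2 * X 0 ^ 2 * X 1 ^ 2 * X 2 ^ 2
      + (-24) * C D * C D * C F * X 0 ^ 2 * X 1 ^ 4
      + (48) * C B * C D * C E * X 0 ^ 2 * X 1 ^ 4
      + (288) * C A * C B * C F * X 0 ^ 2 * X 1 ^ 4
      + (-24) * C D * C E * C E * X 0 ^ 4 * X 2 ^ 2
      + (48) * C A * C E * C F * X 0 ^ 4 * X 2 ^ 2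
      + (288) * C A * C C2 * C D * X 0 ^ 4 * X 2 ^ 2
      + (-24) * C D * C D * C E * X 0 ^ 4 * X 1 ^ 2
      + (48) * C A * C D * C F * X 0 ^ 4 * X 1 ^ 2
      + (288) * C A * C B * C E * X 0 ^ 4 * X 1 ^ 2
      + (48) * C A * C D * C E * X 0 ^ 6 := by
  have ne01 : (1:Fin 3) ≠ 0 := by decide
  have ne02 : (2:Fin 3) ≠ 0 := by decide
  have ne10 : (0:Fin 3) ≠ 1 := by decide
  have ne12 : (2:Fin 3) ≠ 1 := by decide
  have ne20 : (0:Fin 3) ≠ 2 := by decide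
  have ne21 : (1:Fin 3) ≠ 2 := by decide
  set P : MvPolynomial (Fin 3) ℂ := C A * X 0 ^ 4 + C B * X 1 ^ 4 + C C2 * X 2 ^ 4
      + C D * X 0 ^ 2 * X 1 ^ 2 + C E * X 0 ^ 2 * X 2 ^ 2 + C F * X 1 ^ 2 * X 2 ^ 2 with hP
  have d0 : pderiv 0 P = C (4*A) * X 0 ^ 3 + C (2*D) * (X 0 * X 1 ^ 2)
      + C (2*E) * (X 0 * X 2 ^ 2) := by
    rw [hP]
    simp only [map_add, pderiv_C_mul, pderiv_mul, pderiv_pow, pderiv_X_self,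
      pderiv_X_of_ne ne01, pderiv_X_of_ne ne02, pderiv_C]
    simp only [C_mul, map_ofNat, Nat.cast_ofNat]
    ring
  have d1 : pderiv 1 P = C (4*B) * X 1 ^ 3 + C (2*D) * (X 0 ^ 2 * X 1)
      + C (2*F) * (X 1 * X 2 ^ 2) := by
    rw [hP]
    simp only [map_add, pderiv_C_mul, pderiv_mul, pderiv_pow, pderiv_X_self,
      pderiv_X_of_ne ne10, pderiv_X_of_ne ne12, pderiv_C]
    simp only [C_mul, map_ofNat, Nat.cast_ofNat]
    ring
  have d2 : pderiv 2 P = C (4*C2) * X 2 ^ 3 + C (2*E) * (X 0 ^ 2 * X 2)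
      + C (2*F) * (X 1 ^ 2 * X 2) := by
    rw [hP]
    simp only [map_add, pderiv_C_mul, pderiv_mul, pderiv_pow, pderiv_X_self,
      pderiv_X_of_ne ne20, pderiv_X_of_ne ne21, pderiv_C]
    simp only [C_mul, map_ofNat, Nat.cast_ofNat]
    ring
  have h00 : pderiv 0 (pderiv 0 P) = C (12*A) * X 0 ^ 2 + C (2*D) * X 1 ^ 2
      + C (2*E) * X 2 ^ 2 := by
    rw [d0]
    simp only [map_add, pderiv_C_mul, pderiv_mul, pderiv_pow, pderiv_X_self,
      pderiv_X_of_ne ne01, pderiv_X_of_ne ne02, pderiv_C]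
    simp only [C_mul, map_ofNat, Nat.cast_ofNat]
    ring
  have h10 : pderiv 1 (pderiv 0 P) = C (4*D) * (X 0 * X 1) := by
    rw [d0]
    simp only [map_add, pderiv_C_mul, pderiv_mul, pderiv_pow, pderiv_X_self,
      pderiv_X_of_ne ne10, pderiv_X_of_ne ne12, pderiv_C]
    simp only [C_mul, map_ofNat, Nat.cast_ofNat]
    ring
  have h20 : pderiv 2 (pderiv 0 P) = C (4*E) * (X 0 * X 2) := by
    rw [d0]
    simp only [map_add, pderiv_C_mul, pderiv_mul, pderiv_pow, pderiv_X_self,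
      pderiv_X_of_ne ne20, pderiv_X_of_ne ne21, pderiv_C]
    simp only [C_mul, map_ofNat, Nat.cast_ofNat]
    ring
  have h01 : pderiv 0 (pderiv 1 P) = C (4*D) * (X 0 * X 1) := by
    rw [d1]
    simp only [map_add, pderiv_C_mul, pderiv_mul, pderiv_pow, pderiv_X_self,
      pderiv_X_of_ne ne01, pderiv_X_of_ne ne02, pderiv_C]
    simp only [C_mul, map_ofNat, Nat.cast_ofNat]
    ring
  have h11 : pderiv 1 (pderiv 1 P) = C (12*B) * X 1 ^ 2 + C (2*D) * X 0 ^ 2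
      + C (2*F) * X 2 ^ 2 := by
    rw [d1]
    simp only [map_add, pderiv_C_mul, pderiv_mul, pderiv_pow, pderiv_X_self,
      pderiv_X_of_ne ne10, pderiv_X_of_ne ne12, pderiv_C]
    simp only [C_mul, map_ofNat, Nat.cast_ofNat]
    ring
  have h21 : pderiv 2 (pderiv 1 P) = C (4*F) * (X 1 * X 2) := by
    rw [d1]
    simp only [map_add, pderiv_C_mul, pderiv_mul, pderiv_pow, pderiv_X_self,
      pderiv_X_of_ne ne20, pderiv_X_of_ne ne21, pderiv_C]
    simp only [C_mul, map_ofNat, Nat.cast_ofNat]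
    ring
  have h02 : pderiv 0 (pderiv 2 P) = C (4*E) * (X 0 * X 2) := by
    rw [d2]
    simp only [map_add, pderiv_C_mul, pderiv_mul, pderiv_pow, pderiv_X_self,
      pderiv_X_of_ne ne01, pderiv_X_of_ne ne02, pderiv_C]
    simp only [C_mul, map_ofNat, Nat.cast_ofNat]
    ring
  have h12 : pderiv 1 (pderiv 2 P) = C (4*F) * (X 1 * X 2) := by
    rw [d2]
    simp only [map_add, pderiv_C_mul, pderiv_mul, pderiv_pow, pderiv_X_self,
      pderiv_X_of_ne ne10, pderiv_X_of_ne ne12, pderiv_C]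
    simp only [C_mul, map_ofNat, Nat.cast_ofNat]
    ring
  have h22 : pderiv 2 (pderiv 2 P) = C (12*C2) * X 2 ^ 2 + C (2*E) * X 0 ^ 2
      + C (2*F) * X 1 ^ 2 := by
    rw [d2]
    simp only [map_add, pderiv_C_mul, pderiv_mul, pderiv_pow, pderiv_X_self,
      pderiv_X_of_ne ne20, pderiv_X_of_ne ne21, pderiv_C]
    simp only [C_mul, map_ofNat, Nat.cast_ofNat]
    ring
  unfold hessian
  rw [Matrix.det_fin_three]
  simp only [Matrix.of_apply, h00, h01, h02, h10, h11, h12, h20, h21, h22,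
    C_mul, map_ofNat]
  ring

lemma eval_zero_factor (s t : ℂ) (i j k : Fin 3) :
    eval (fun _ => (0:ℂ)) (C s * X i ^ 2 + C t * (X j * X k)) = 0 := by
  simp

lemma eval_zero_factor' (s t : ℂ) (i j k : Fin 3) :
    eval (fun _ => (0:ℂ)) (C s * X i ^ 2 - C t * (X j * X k)) = 0 := by
  simp

lemma not_unit_factor (s t : ℂ) (i j k : Fin 3)
    (h : IsUnit (C s * X i ^ 2 + C t * (X j * X k))) : False := by
  have h0 := h.map (eval (fun _ => (0:ℂ)))
  rw [eval_zero_factor] at h0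
  exact h0.ne_zero rfl

lemma not_unit_factor' (s t : ℂ) (i j k : Fin 3)
    (h : IsUnit (C s * X i ^ 2 - C t * (X j * X k))) : False := by
  have h0 := h.map (eval (fun _ => (0:ℂ)))
  rw [eval_zero_factor'] at h0
  exact h0.ne_zero rfl

/-- The key contradiction: an irreducible polynomial cannot equal `C c * X i ^ 4 + C d * X j ^ 2 * X k ^ 2`. -/
lemma not_irreducible_binomial (f : MvPolynomial (Fin 3) ℂ) (hirr : Irreducible f)
    (c d : ℂ) (i j k : Fin 3)
    (hf : f = C c * X i ^ 4 + C d * (X j ^ 2 * X k ^ 2)) : False := by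
  obtain ⟨s, hs⟩ := IsAlgClosed.exists_pow_nat_eq (k := ℂ) c (n := 2) two_pos
  obtain ⟨t, ht⟩ := IsAlgClosed.exists_pow_nat_eq (k := ℂ) (-d) (n := 2) two_pos
  have hsC : (C s : MvPolynomial (Fin 3) ℂ) ^ 2 = C c := by rw [← map_pow, hs]
  have htC : (C t : MvPolynomial (Fin 3) ℂ) ^ 2 = - C d := by rw [← map_pow, ht, map_neg]
  have hfac : f = (C s * X i ^ 2 + C t * (X j * X k)) * (C s * X i ^ 2 - C t * (X j * X k)) := by
    rw [hf]
    linear_combination (-(X i ^ 4 : MvPolynomial (Fin 3) ℂ)) * hsC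
      + (X j ^ 2 * X k ^ 2 : MvPolynomial (Fin 3) ℂ) * htC
  rcases hirr.isUnit_or_isUnit hfac with h | h
  · exact not_unit_factor s t i j k h
  · exact not_unit_factor' s t i j k h

/-- An irreducible `G₈`-invariant plane quartic with Hessian `x²y²z²` is of the
form `A x⁴ + B y⁴ + C z⁴` with `ABC = 1/1728`. -/
theorem irreducible_invariant_quartic_with_hessian (f : MvPolynomial (Fin 3) ℂ)
    (hirr : Irreducible f) (hhom : f.IsHomogeneous 4)
    (hinv : ∀ j : Fin 3, signChange j f = f)
    (hhess : hessian f = X 0 ^ 2 * X 1 ^ 2 * X 2 ^ 2) :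
    ∃ A B C' : ℂ, f = MvPolynomial.C A * X 0 ^ 4 + MvPolynomial.C B * X 1 ^ 4 +
        MvPolynomial.C C' * X 2 ^ 4 ∧ A * B * C' = 1 / 1728 := by
  have hodd : ∀ m : Fin 3 →₀ ℕ, (Odd (m 0) ∨ Odd (m 1) ∨ Odd (m 2)) → coeff m f = 0 := by
    rintro m (h | h | h)
    · exact coeff_eq_zero_of_odd 0 f (hinv 0) m h
    · exact coeff_eq_zero_of_odd 1 f (hinv 1) m h
    · exact coeff_eq_zero_of_odd 2 f (hinv 2) m h
  set A := coeff (expv 4 0 0) f with hAdef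
  set B := coeff (expv 0 4 0) f with hBdef
  set C' := coeff (expv 0 0 4) f with hCdef
  set D := coeff (expv 2 2 0) f with hDdef
  set E := coeff (expv 2 0 2) f with hEdef
  set F := coeff (expv 0 2 2) f with hFdef
  have hf : f = C A * X 0 ^ 4 + C B * X 1 ^ 4 + C C' * X 2 ^ 4
      + C D * X 0 ^ 2 * X 1 ^ 2 + C E * X 0 ^ 2 * X 2 ^ 2 + C F * X 1 ^ 2 * X 2 ^ 2 := by
    have h := decomp f hhom hodd
    rw [monomial_expv_eq, monomial_expv_eq, monomial_expv_eq, monomial_expv_eq,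
      monomial_expv_eq, monomial_expv_eq] at h
    rw [h]
    ring
  have hq : ((48:MvPolynomial (Fin 3) ℂ)) * C C' * C E * C F * X 2 ^ 6
      + (-24) * C E * C F * C F * X 1 ^ 2 * X 2 ^ 4
      + (48) * C C' * C D * C F * X 1 ^ 2 * X 2 ^ 4
      + (288) * C B * C C' * C E * X 1 ^ 2 * X 2 ^ 4
      + (-24) * C D * C F * C F * X 1 ^ 4 * X 2 ^ 2
      + (48) * C B * C E * C F * X 1 ^ 4 * X 2 ^ 2
      + (288) * C B * C C' * C D * X 1 ^ 4 * X 2 ^ 2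
      + (48) * C B * C D * C F * X 1 ^ 6
      + (-24) * C E * C E * C F * X 0 ^ 2 * X 2 ^ 4
      + (48) * C C' * C D * C E * X 0 ^ 2 * X 2 ^ 4
      + (288) * C A * C C' * C F * X 0 ^ 2 * X 2 ^ 4
      + (144) * C D * C E * C F * X 0 ^ 2 * X 1 ^ 2 * X 2 ^ 2
      + (-144) * C C' * C D * C D * X 0 ^ 2 * X 1 ^ 2 * X 2 ^ 2
      + (-144) * C B * C E * C E * X 0 ^ 2 * X 1 ^ 2 * X 2 ^ 2
      + (-144) * C A * C F * C F * X 0 ^ 2 * X 1 ^ 2 * X 2 ^ 2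
      + (1728) * C A * C B * C C' * X 0 ^ 2 * X 1 ^ 2 * X 2 ^ 2
      + (-24) * C D * C D * C F * X 0 ^ 2 * X 1 ^ 4
      + (48) * C B * C D * C E * X 0 ^ 2 * X 1 ^ 4
      + (288) * C A * C B * C F * X 0 ^ 2 * X 1 ^ 4
      + (-24) * C D * C E * C E * X 0 ^ 4 * X 2 ^ 2
      + (48) * C A * C E * C F * X 0 ^ 4 * X 2 ^ 2
      + (288) * C A * C C' * C D * X 0 ^ 4 * X 2 ^ 2
      + (-24) * C D * C D * C E * X 0 ^ 4 * X 1 ^ 2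
      + (48) * C A * C D * C F * X 0 ^ 4 * X 1 ^ 2
      + (288) * C A * C B * C E * X 0 ^ 4 * X 1 ^ 2
      + (48) * C A * C D * C E * X 0 ^ 6
      = X 0 ^ 2 * X 1 ^ 2 * X 2 ^ 2 := by
    rw [← hessian_explicit A B C' D E F, ← hf, hhess]
  have hev : ∀ v : Fin 3 → ℂ,
      (48) * C' * E * F * (v 2) ^ 6
      + (-24) * E * F * F * (v 1) ^ 2 * (v 2) ^ 4
      + (48) * C' * D * F * (v 1) ^ 2 * (v 2) ^ 4
      + (288) * B * C' * E * (v 1) ^ 2 * (v 2) ^ 4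
      + (-24) * D * F * F * (v 1) ^ 4 * (v 2) ^ 2
      + (48) * B * E * F * (v 1) ^ 4 * (v 2) ^ 2
      + (288) * B * C' * D * (v 1) ^ 4 * (v 2) ^ 2
      + (48) * B * D * F * (v 1) ^ 6
      + (-24) * E * E * F * (v 0) ^ 2 * (v 2) ^ 4
      + (48) * C' * D * E * (v 0) ^ 2 * (v 2) ^ 4
      + (288) * A * C' * F * (v 0) ^ 2 * (v 2) ^ 4
      + (144) * D * E * F * (v 0) ^ 2 * (v 1) ^ 2 * (v 2) ^ 2
      + (-144) * C' * D * D * (v 0) ^ 2 * (v 1) ^ 2 * (v 2) ^ 2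
      + (-144) * B * E * E * (v 0) ^ 2 * (v 1) ^ 2 * (v 2) ^ 2
      + (-144) * A * F * F * (v 0) ^ 2 * (v 1) ^ 2 * (v 2) ^ 2
      + (1728) * A * B * C' * (v 0) ^ 2 * (v 1) ^ 2 * (v 2) ^ 2
      + (-24) * D * D * F * (v 0) ^ 2 * (v 1) ^ 4
      + (48) * B * D * E * (v 0) ^ 2 * (v 1) ^ 4
      + (288) * A * B * F * (v 0) ^ 2 * (v 1) ^ 4
      + (-24) * D * E * E * (v 0) ^ 4 * (v 2) ^ 2
      + (48) * A * E * F * (v 0) ^ 4 * (v 2) ^ 2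
      + (288) * A * C' * D * (v 0) ^ 4 * (v 2) ^ 2
      + (-24) * D * D * E * (v 0) ^ 4 * (v 1) ^ 2
      + (48) * A * D * F * (v 0) ^ 4 * (v 1) ^ 2
      + (288) * A * B * E * (v 0) ^ 4 * (v 1) ^ 2
      + (48) * A * D * E * (v 0) ^ 6
      = (v 0) ^ 2 * (v 1) ^ 2 * (v 2) ^ 2 := by
    intro v
    have h := congrArg (eval v) hq
    simpa only [map_add, map_mul, map_pow, map_neg, map_ofNat, eval_C, eval_X] using h
  have h1 := hev ![1,0,0]
  have h2 := hev ![0,1,0]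
  have h3 := hev ![0,0,1]
  have h4 := hev ![1,1,0]
  have h5 := hev ![2,1,0]
  have h6 := hev ![1,0,1]
  have h7 := hev ![2,0,1]
  have h8 := hev ![0,1,1]
  have h9 := hev ![0,2,1]
  have h10 := hev ![1,1,1]
  norm_num [-mul_eq_zero, Matrix.cons_val_zero, Matrix.cons_val_one, Matrix.head_cons, Matrix.cons_val_two, Matrix.tail_cons] at h1 h2 h3 h4 h5 h6 h7 h8 h9 h10
  have q600 : 48*A*D*E = 0 := by linear_combination h1
  have q060 : 48*B*D*F = 0 := by linear_combination h2
  have q006 : 48*C'*E*F = 0 := by linear_combination h3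
  have q420 : 288*A*B*E + 48*A*D*F - 24*D^2*E = 0 := by
    linear_combination (-5:ℂ)*h1 + (1/4:ℂ)*h2 + (-1/3:ℂ)*h4 + (1/12:ℂ)*h5
  have q240 : 288*A*B*F + 48*B*D*E - 24*D^2*F = 0 := by
    linear_combination (4:ℂ)*h1 + (-5/4:ℂ)*h2 + (4/3:ℂ)*h4 + (-1/12:ℂ)*h5
  have q402 : 288*A*C'*D + 48*A*E*F - 24*D*E^2 = 0 := by
    linear_combination (-5:ℂ)*h1 + (1/4:ℂ)*h3 + (-1/3:ℂ)*h6 + (1/12:ℂ)*h7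
  have q204 : 288*A*C'*F + 48*C'*D*E - 24*E^2*F = 0 := by
    linear_combination (4:ℂ)*h1 + (-5/4:ℂ)*h3 + (4/3:ℂ)*h6 + (-1/12:ℂ)*h7
  have q042 : 288*B*C'*D + 48*B*E*F - 24*D*F^2 = 0 := by
    linear_combination (-5:ℂ)*h2 + (1/4:ℂ)*h3 + (-1/3:ℂ)*h8 + (1/12:ℂ)*h9
  have q024 : 288*B*C'*E + 48*C'*D*F - 24*E*F^2 = 0 := by
    linear_combination (4:ℂ)*h2 + (-5/4:ℂ)*h3 + (4/3:ℂ)*h8 + (-1/12:ℂ)*h9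
  have q222 : 1728*A*B*C' + 144*D*E*F - 144*C'*D^2 - 144*B*E^2 - 144*A*F^2 = 1 := by
    linear_combination h1 + h2 + h3 - h4 - h6 - h8 + h10
  clear h1 h2 h3 h4 h5 h6 h7 h8 h9 h10 hev hq
  -- Step 1 : D = 0
  have hD : D = 0 := by
    by_contra hDne
    have hAE : A * E = 0 := by
      have h : A * E * D = 0 := by linear_combination q600 / 48
      exact (mul_eq_zero.mp h).resolve_right hDne
    have hBF : B * F = 0 := by
      have h : B * F * D = 0 := by linear_combination q060 / 48
      exact (mul_eq_zero.mp h).resolve_right hDne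
    have hE0 : E = 0 := by
      by_contra hEne
      have hA : A = 0 := (mul_eq_zero.mp hAE).resolve_right hEne
      have h : D * D * E = 0 := by
        linear_combination (-1/24:ℂ)*q420 + (12*B*E + 2*D*F)*hA
      exact hEne ((mul_eq_zero.mp h).resolve_left (mul_ne_zero hDne hDne))
    have hF0 : F = 0 := by
      by_contra hFne
      have hB : B = 0 := (mul_eq_zero.mp hBF).resolve_right hFne
      have h : D * D * F = 0 := by
        linear_combination (-1/24:ℂ)*q240 + (2*D*E + 12*A*F)*hB
      exact hFne ((mul_eq_zero.mp h).resolve_left (mul_ne_zero hDne hDne))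
    have hAC : A * C' = 0 := by
      have h : A * C' * D = 0 := by
        linear_combination (1/288:ℂ)*q402 - (A*F/6 - D*E/12)*hE0
      exact (mul_eq_zero.mp h).resolve_right hDne
    have hBC : B * C' = 0 := by
      have h : B * C' * D = 0 := by
        linear_combination (1/288:ℂ)*q042 - (B*E/6 - D*F/12)*hF0
      exact (mul_eq_zero.mp h).resolve_right hDne
    have hCne : C' ≠ 0 := by
      intro h0
      have hcontr : (1:ℂ) = 0 := by
        linear_combination -q222 + (144*D*F - 144*B*E)*hE0 + (-144*A*F)*hF0
          + (-144*D^2 + 1728*A*B)*h0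
      exact one_ne_zero hcontr
    have hA : A = 0 := (mul_eq_zero.mp hAC).resolve_right hCne
    have hB : B = 0 := (mul_eq_zero.mp hBC).resolve_right hCne
    have hf2 : f = C C' * X 2 ^ 4 + C D * (X 0 ^ 2 * X 1 ^ 2) := by
      rw [hf, hA, hB, hE0, hF0]
      simp only [map_zero, zero_mul, add_zero, zero_add, mul_zero]
      ring
    exact not_irreducible_binomial f hirr C' D 2 0 1 hf2
  -- Step 2 : E = 0
  have hE : E = 0 := by
    by_contra hEne
    have hCF : C' * F = 0 := by
      have h : C' * F * E = 0 := by linear_combination q006 / 48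
      exact (mul_eq_zero.mp h).resolve_right hEne
    have hAF : A * F = 0 := by
      have h : A * F * E = 0 := by
        linear_combination (1/48:ℂ)*q402 - (-E^2/2 + 6*A*C')*hD
      exact (mul_eq_zero.mp h).resolve_right hEne
    have hF0 : F = 0 := by
      by_contra hFne
      have hC0 : C' = 0 := (mul_eq_zero.mp hCF).resolve_right hFne
      have hA0 : A = 0 := (mul_eq_zero.mp hAF).resolve_right hFne
      have h : E * E * F = 0 := by
        linear_combination (-1/24:ℂ)*q204 + (2*D*E + 12*A*F)*hC0
      exact hFne ((mul_eq_zero.mp h).resolve_left (mul_ne_zero hEne hEne))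
    have hAB : A * B = 0 := by
      have h : A * B * E = 0 := by
        linear_combination (1/288:ℂ)*q420 - (A*F/6 - D*E/12)*hD
      exact (mul_eq_zero.mp h).resolve_right hEne
    have hBC : B * C' = 0 := by
      have h : B * C' * E = 0 := by
        linear_combination (1/288:ℂ)*q024 - (C'*D/6 - E*F/12)*hF0
      exact (mul_eq_zero.mp h).resolve_right hEne
    have hBne : B ≠ 0 := by
      intro h0
      have hcontr : (1:ℂ) = 0 := by
        linear_combination -q222 + (144*E*F - 144*C'*D)*hD + (-144*A*F)*hF0
          + (-144*E^2 + 1728*A*C')*h0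
      exact one_ne_zero hcontr
    have hA : A = 0 := (mul_eq_zero.mp hAB).resolve_right hBne
    have hC0 : C' = 0 := (mul_eq_zero.mp hBC).resolve_left hBne
    have hf2 : f = C B * X 1 ^ 4 + C E * (X 0 ^ 2 * X 2 ^ 2) := by
      rw [hf, hA, hC0, hD, hF0]
      simp only [map_zero, zero_mul, add_zero, zero_add, mul_zero]
      ring
    exact not_irreducible_binomial f hirr B E 1 0 2 hf2
  -- Step 3 : F = 0
  have hF : F = 0 := by
    by_contra hFne
    have hAB : A * B = 0 := by
      have h : A * B * F = 0 := by
        linear_combination (1/288:ℂ)*q240 - (B*E/6 - D*F/12)*hD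
      exact (mul_eq_zero.mp h).resolve_right hFne
    have hAC : A * C' = 0 := by
      have h : A * C' * F = 0 := by
        linear_combination (1/288:ℂ)*q204 - (C'*D/6 - E*F/12)*hE
      exact (mul_eq_zero.mp h).resolve_right hFne
    have hAne : A ≠ 0 := by
      intro h0
      have hcontr : (1:ℂ) = 0 := by
        linear_combination -q222 + (144*E*F - 144*C'*D)*hD + (-144*B*E)*hE
          + (-144*F^2 + 1728*B*C')*h0
      exact one_ne_zero hcontr
    have hB : B = 0 := (mul_eq_zero.mp hAB).resolve_left hAne
    have hC0 : C' = 0 := (mul_eq_zero.mp hAC).resolve_left hAne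
    have hf2 : f = C A * X 0 ^ 4 + C F * (X 1 ^ 2 * X 2 ^ 2) := by
      rw [hf, hB, hC0, hD, hE]
      simp only [map_zero, zero_mul, add_zero, zero_add, mul_zero]
      ring
    exact not_irreducible_binomial f hirr A F 0 1 2 hf2
  -- Conclusion
  refine ⟨A, B, C', ?_, ?_⟩
  · rw [hf, hD, hE, hF]
    simp only [map_zero, zero_mul, add_zero, zero_add, mul_zero]
  · linear_combination (1/1728:ℂ)*q222 - ((E*F - C'*D)/12)*hD + (B*E/12)*hE + (A*F/12)*hF
end
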